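/- Let x₁, ..., x_M be pairwise distinct points in ℝⁿ and α > 0. Then the M×M matrix K with entries K_{jk} = exp(-α ‖x_j - x_k‖²) is symmetric positive definite. -/

import Mathlib

/-!
Writing `exp (-α‖xⱼ - xₖ‖²) = dⱼ · exp (2α (⟪xⱼ, xₖ⟫ + 1)) · dₖ` with `dⱼ > 0` reduces the claim to
the matrix `exp (γ Xⱼ ⬝ Xₖ)`, where `Xⱼ = (1, xⱼ)`. Expanding the exponential, its quadratic form
at `b` is `∑ₘ γᵐ / m! · ‖∑ⱼ bⱼ Xⱼ^⊗m‖²`, which is nonnegative and vanishes only if every moment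
`∑ⱼ bⱼ Xⱼ^⊗m` does. Pairing these moments with products of linear forms evaluates
`∑ⱼ bⱼ p(Xⱼ)`, and the product `p = ∏_{l ≠ k} ⟪xₖ - xₗ, · - xₗ⟫` (affine in `x`, linear in `X`)
vanishes at every point except `xₖ`, forcing `bₖ = 0`.
-/

open Finset Matrix Real
open scoped Nat

def tensorProd {σ κ : Type*} [Fintype σ] (u : σ → κ → ℝ) : (σ → κ) → ℝ :=
  fun w => ∏ l, u l (w l)

def tensorPow {κ : Type*} (v : κ → ℝ) (m : ℕ) : (Fin m → κ) → ℝ :=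
  tensorProd fun _ => v

theorem tensorProd_dotProduct_tensorProd {σ κ : Type*} [Fintype σ] [DecidableEq σ] [Fintype κ]
    (u v : σ → κ → ℝ) : tensorProd u ⬝ᵥ tensorProd v = ∏ l, u l ⬝ᵥ v l := by
  simp only [dotProduct, tensorProd, Fintype.prod_sum, prod_mul_distrib]

theorem tensorPow_dotProduct_tensorPow {κ : Type*} [Fintype κ] (v w : κ → ℝ) (m : ℕ) :
    tensorPow v m ⬝ᵥ tensorPow w m = (v ⬝ᵥ w) ^ m := by
  simp [tensorPow, tensorProd_dotProduct_tensorProd]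

section ExpGram

variable {ι κ : Type*} [Fintype ι] [Fintype κ]

theorem hasSum_dotProduct_mulVec_exp_dotProduct (γ : ℝ) (b : ι → ℝ) (X : ι → κ → ℝ) :
    HasSum (fun m : ℕ => γ ^ m / m ! *
        ((∑ j, b j • tensorPow (X j) m) ⬝ᵥ ∑ j, b j • tensorPow (X j) m))
      (star b ⬝ᵥ (of (fun j k => exp (γ * X j ⬝ᵥ X k)) *ᵥ b)) := by
  have hexp (j k : ι) : HasSum (fun m : ℕ => b j * b k * ((γ * X j ⬝ᵥ X k) ^ m / m !))
      (b j * b k * exp (γ * X j ⬝ᵥ X k)) := by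
    simpa only [← Real.exp_eq_exp_ℝ]
      using (NormedSpace.expSeries_div_hasSum_exp (γ * X j ⬝ᵥ X k)).mul_left (b j * b k)
  convert hasSum_sum fun j _ => hasSum_sum fun k _ => hexp j k using 1
  · ext m
    simp only [sum_dotProduct, dotProduct_sum, smul_dotProduct, dotProduct_smul, smul_eq_mul,
      tensorPow_dotProduct_tensorPow, mul_sum]
    refine sum_congr rfl fun j _ => sum_congr rfl fun k _ => by rw [dotProduct_comm (X k)]; ring
  · simp only [dotProduct, mulVec, Pi.star_apply, star_trivial, of_apply, mul_sum]
    exact sum_congr rfl fun j _ => sum_congr rfl fun k _ => by ring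

theorem posDef_of_exp_dotProduct {γ : ℝ} (hγ : 0 < γ) {X : ι → κ → ℝ}
    (hX : ∀ k, ∃ m, ∃ u : Fin m → κ → ℝ, ∀ j, ∏ l, u l ⬝ᵥ X j = 0 ↔ j ≠ k) :
    (of fun j k => exp (γ * X j ⬝ᵥ X k)).PosDef := by
  classical
  refine .of_dotProduct_mulVec_pos ?_ fun b hb => ?_
  · ext j k
    simp [dotProduct_comm]
  set V : (m : ℕ) → (Fin m → κ) → ℝ := fun m => ∑ j, b j • tensorPow (X j) m
  have hsum := hasSum_dotProduct_mulVec_exp_dotProduct γ b X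
  have hterm (m : ℕ) : 0 ≤ γ ^ m / m ! * (V m ⬝ᵥ V m) :=
    mul_nonneg (by positivity) (Fintype.sum_nonneg fun _ => mul_self_nonneg _)
  refine (hsum.nonneg hterm).lt_of_ne' fun h0 => hb ?_
  have hV (m : ℕ) : V m = 0 := by
    have := congrFun ((hasSum_zero_iff_of_nonneg hterm).1 (h0 ▸ hsum)) m
    simpa [hγ.ne', Nat.factorial_ne_zero] using this
  funext k
  obtain ⟨m, u, hu⟩ := hX k
  have hmoment : ∑ j, b j * ∏ l, u l ⬝ᵥ X j = 0 := by
    simpa [V, dotProduct_sum, dotProduct_smul, tensorPow, tensorProd_dotProduct_tensorProd]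
      using congrArg (tensorProd u ⬝ᵥ ·) (hV m)
  rw [sum_eq_single k (fun j _ hjk => by rw [(hu j).2 hjk, mul_zero]) (by simp)] at hmoment
  exact (mul_eq_zero.1 hmoment).resolve_right ((hu k).not.2 (by simp))

end ExpGram

theorem exists_prod_dotProduct_vecCons_one_eq_zero_iff {M n : ℕ} {p : Fin M → Fin n → ℝ}
    (hp : Function.Injective p) (k : Fin M) :
    ∃ m, ∃ u : Fin m → Fin (n + 1) → ℝ, ∀ j, ∏ l, u l ⬝ᵥ vecCons 1 (p j) = 0 ↔ j ≠ k := by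
  classical
  refine ⟨M, fun l => if l = k then vecCons 1 0 else vecCons (-((p k - p l) ⬝ᵥ p l)) (p k - p l),
    fun j => ?_⟩
  have hfactor (l : Fin M) : (if l = k then vecCons 1 0 else
      vecCons (-((p k - p l) ⬝ᵥ p l)) (p k - p l)) ⬝ᵥ vecCons 1 (p j)
      = if l = k then 1 else (p k - p l) ⬝ᵥ (p j - p l) := by
    split_ifs
    · simp
    · rw [cons_dotProduct_cons, dotProduct_sub]; ring
  simp only [hfactor, prod_eq_zero_iff, mem_univ, true_and]
  constructor
  · rintro ⟨l, hl⟩ rfl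
    split_ifs at hl with hlk
    · exact one_ne_zero hl
    · exact hlk (hp (sub_eq_zero.1 (dotProduct_self_eq_zero.1 hl))).symm
  · exact fun hjk => ⟨j, by simp [hjk]⟩

theorem rbf_kernel_matrix_posDef (n M : ℕ) (x : Fin M → EuclideanSpace ℝ (Fin n))
    (hx : Function.Injective x) (α : ℝ) (hα : 0 < α) :
    (Matrix.of fun j k : Fin M => Real.exp (-α * ‖x j - x k‖ ^ 2)).PosDef := by
  classical
  set X : Fin M → Fin (n + 1) → ℝ := fun j => vecCons 1 (x j).ofLp
  set d : Fin M → ℝ := fun j => exp (-α * ‖x j‖ ^ 2 - α)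
  have hX (j k : Fin M) : X j ⬝ᵥ X k = 1 + inner ℝ (x j) (x k) := by
    simp [X, EuclideanSpace.inner_eq_star_dotProduct, dotProduct_comm]
  have hK : (of fun j k => exp (-α * ‖x j - x k‖ ^ 2))
      = (diagonal d)ᴴ * of (fun j k => exp (2 * α * X j ⬝ᵥ X k)) * diagonal d := by
    ext j k
    have hexponent : -α * ‖x j - x k‖ ^ 2
        = (-α * ‖x j‖ ^ 2 - α) + 2 * α * X j ⬝ᵥ X k + (-α * ‖x k‖ ^ 2 - α) := by
      rw [hX, norm_sub_sq_real]; ring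
    simp only [of_apply, diagonal_conjTranspose, diagonal_mul, mul_diagonal, star_trivial]
    rw [hexponent, exp_add, exp_add]
  have hd_inj : Function.Injective (diagonal d).mulVec := fun v w h => funext fun i => by
    simpa [mulVec_diagonal, d, exp_ne_zero] using congrFun h i
  rw [hK]
  have hsep := exists_prod_dotProduct_vecCons_one_eq_zero_iff (WithLp.ofLp_injective 2 |>.comp hx)
  exact (posDef_of_exp_dotProduct (by positivity) hsep).conjTranspose_mul_mul_same hd_inj
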